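/- arXiv:1504.01705 — 2 statements merged into one kernel-verified Lean document; each statement's English description precedes it below -/
import Mathlib

section
/- Let V ∈ ℝ^{N×L} and let X be an N×L matrix supported on a row-index set T of size K. Let T̂ be the set of indices of the K rows of V with largest ℓ₂-norm, and let Δ = Γ \ T̂ for some superset Γ ⊇ T̂ of row indices containing T. Then ‖V|_Δ‖_F ≤ ‖V|_{Γ\T} − X|_{Γ\T}‖_F ≤ ‖(V − X)|_Γ‖_F. -/
open scoped BigOperators
open Matrix

noncomputable def frob {m n : Type*} [Fintype m] [Fintype n] (X : Matrix m n ℝ) : ℝ :=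
  Real.sqrt (∑ i, ∑ j, (X i j) ^ 2)

noncomputable def rowNorm {m n : Type*} [Fintype n] (X : Matrix m n ℝ) (i : m) : ℝ :=
  Real.sqrt (∑ j, (X i j) ^ 2)

noncomputable def norm21 {m n : Type*} [Fintype m] [Fintype n] (X : Matrix m n ℝ) : ℝ :=
  ∑ i, rowNorm X i

noncomputable def restrictRows {m n : Type*} (X : Matrix m n ℝ) (S : Set m) : Matrix m n ℝ :=
  fun i j => S.indicator (fun i' => X i' j) i

noncomputable def vnorm {m : Type*} [Fintype m] (v : m → ℝ) : ℝ :=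
  Real.sqrt (∑ i, (v i) ^ 2)

/-- `X` has at most `s` nonzero rows. -/
def rowSparse {m n : Type*} (X : Matrix m n ℝ) (s : ℕ) : Prop :=
  {i | X i ≠ 0}.ncard ≤ s

/-- Column submatrix of `A` with columns indexed by `S`. -/
def colSub {M N : ℕ} (A : Matrix (Fin M) (Fin N) ℝ) (S : Finset (Fin N)) :
    Matrix (Fin M) {j // j ∈ S} ℝ :=
  A.submatrix id (fun j => (j : Fin N))

/-- `D` is the Moore–Penrose pseudo-inverse of `A` (the four Penrose conditions). -/
def IsPinv {m n : Type*} [Fintype m] [Fintype n] (A : Matrix m n ℝ) (D : Matrix n m ℝ) : Prop :=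
  A * D * A = A ∧ D * A * D = D ∧ (A * D)ᵀ = A * D ∧ (D * A)ᵀ = D * A

/-- Restricted isometry property of order `s` with constant `δ`. -/
def RIP {M N : ℕ} (A : Matrix (Fin M) (Fin N) ℝ) (s : ℕ) (δ : ℝ) : Prop :=
  ∀ x : Fin N → ℝ, {i | x i ≠ 0}.ncard ≤ s →
    (1 - δ) * (∑ i, (x i) ^ 2) ≤ (∑ i, (A.mulVec x i) ^ 2) ∧
      (∑ i, (A.mulVec x i) ^ 2) ≤ (1 + δ) * (∑ i, (x i) ^ 2)

lemma frob_restrict {m n : Type*} [Fintype m] [Fintype n] [DecidableEq m]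
    (V : Matrix m n ℝ) (S : Finset m) :
    frob (restrictRows V (S : Set m)) = Real.sqrt (∑ i ∈ S, ∑ j, (V i j) ^ 2) := by
  unfold frob restrictRows
  congr 1
  rw [← Finset.sum_filter_add_sum_filter_not Finset.univ (· ∈ S)]
  have h1 : ∀ i ∈ Finset.univ.filter (· ∉ S),
      (∑ j, ((S : Set m).indicator (fun i' => V i' j) i) ^ 2) = 0 := by
    intro i hi
    simp only [Finset.mem_filter] at hi
    refine Finset.sum_eq_zero fun j _ => ?_
    rw [Set.indicator_of_notMem (fun h => hi.2 (Finset.mem_coe.mp h))]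
    norm_num
  rw [Finset.sum_congr rfl h1, Finset.sum_const_zero, add_zero]
  refine Finset.sum_congr (by ext i; simp) fun i hi => ?_
  refine Finset.sum_congr rfl fun j _ => ?_
  rw [Set.indicator_of_mem (Finset.mem_coe.mpr hi)]

lemma aux_sum_le {α : Type*} (A B : Finset α) (f : α → ℝ) (h : A.card = B.card)
    (hle : ∀ a ∈ A, ∀ b ∈ B, f a ≤ f b) : ∑ a ∈ A, f a ≤ ∑ b ∈ B, f b := by
  obtain e := Finset.equivOfCardEq h
  calc ∑ a ∈ A, f a = ∑ a : A, f a.1 := (Finset.sum_attach A f).symm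
    _ ≤ ∑ a : A, f (e a).1 := Finset.sum_le_sum fun a _ => hle a.1 a.2 (e a).1 (e a).2
    _ = ∑ b : B, f b.1 := e.sum_comp (fun b => f b.1)
    _ = ∑ b ∈ B, f b := Finset.sum_attach B f

theorem stmt6 {N L K : ℕ} (V X : Matrix (Fin N) (Fin L) ℝ)
    (T That Γ : Finset (Fin N))
    (hTcard : T.card = K) (hsupp : ∀ i, X i ≠ 0 → i ∈ T)
    (hThatcard : That.card = K)
    (hsel : ∀ i ∈ That, ∀ j ∉ That, rowNorm V j ≤ rowNorm V i)
    (hTΓ : T ⊆ Γ) (hThatΓ : That ⊆ Γ) :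
    frob (restrictRows V ((Γ \ That : Finset (Fin N)) : Set (Fin N))) ≤
      frob (restrictRows V ((Γ \ T : Finset (Fin N)) : Set (Fin N)) -
        restrictRows X ((Γ \ T : Finset (Fin N)) : Set (Fin N))) ∧
    frob (restrictRows V ((Γ \ T : Finset (Fin N)) : Set (Fin N)) -
        restrictRows X ((Γ \ T : Finset (Fin N)) : Set (Fin N))) ≤
      frob (restrictRows (V - X) (Γ : Set (Fin N))) := by
  have hXzero : ∀ i ∈ Γ \ T, X i = 0 := by
    intro i hi
    by_contra h
    exact (Finset.mem_sdiff.mp hi).2 (hsupp i h)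
  have hsub : restrictRows V ((Γ \ T : Finset (Fin N)) : Set (Fin N)) -
      restrictRows X ((Γ \ T : Finset (Fin N)) : Set (Fin N)) =
      restrictRows V ((Γ \ T : Finset (Fin N)) : Set (Fin N)) := by
    ext i j
    by_cases hi : i ∈ Γ \ T
    · have hm : i ∈ ((Γ \ T : Finset (Fin N)) : Set (Fin N)) := Finset.mem_coe.mpr hi
      simp only [Matrix.sub_apply, restrictRows, Set.indicator_of_mem hm]
      have hX : X i j = 0 := by rw [hXzero i hi]; rfl
      rw [hX]; ring
    · have hm : i ∉ ((Γ \ T : Finset (Fin N)) : Set (Fin N)) :=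
        fun h => hi (Finset.mem_coe.mp h)
      simp only [Matrix.sub_apply, restrictRows, Set.indicator_of_notMem hm]
      ring
  rw [hsub, frob_restrict, frob_restrict, frob_restrict]
  constructor
  · apply Real.sqrt_le_sqrt
    have hdecomp1 : Γ \ That = (Γ \ (T ∪ That)) ∪ (T \ That) := by
      ext i
      simp only [Finset.mem_sdiff, Finset.mem_union]
      have := @hTΓ i
      tauto
    have hdecomp2 : Γ \ T = (Γ \ (T ∪ That)) ∪ (That \ T) := by
      ext i
      simp only [Finset.mem_sdiff, Finset.mem_union]
      have := @hThatΓ i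
      tauto
    have hd1 : Disjoint (Γ \ (T ∪ That)) (T \ That) := by
      rw [Finset.disjoint_left]
      intro a ha hb
      simp only [Finset.mem_sdiff, Finset.mem_union] at ha hb
      tauto
    have hd2 : Disjoint (Γ \ (T ∪ That)) (That \ T) := by
      rw [Finset.disjoint_left]
      intro a ha hb
      simp only [Finset.mem_sdiff, Finset.mem_union] at ha hb
      tauto
    rw [hdecomp1, hdecomp2, Finset.sum_union hd1, Finset.sum_union hd2]
    refine add_le_add le_rfl ?_
    have hcard : (T \ That).card = (That \ T).card := by
      have h1 := Finset.card_sdiff_add_card_inter T That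
      have h2 := Finset.card_sdiff_add_card_inter That T
      rw [Finset.inter_comm] at h2
      omega
    refine aux_sum_le _ _ (fun i => ∑ j, (V i j) ^ 2) hcard fun a ha b hb => ?_
    simp only [Finset.mem_sdiff] at ha hb
    have h := hsel b hb.1 a ha.2
    have key : ∀ c : Fin N, ∑ j, (V c j) ^ 2 = (rowNorm V c) ^ 2 := fun c =>
      (Real.sq_sqrt (Finset.sum_nonneg fun j _ => sq_nonneg _)).symm
    show (∑ j, (V a j) ^ 2) ≤ ∑ j, (V b j) ^ 2
    rw [key a, key b]
    exact pow_le_pow_left₀ (Real.sqrt_nonneg _) h 2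
  · apply Real.sqrt_le_sqrt
    calc ∑ i ∈ Γ \ T, ∑ j, (V i j) ^ 2
        = ∑ i ∈ Γ \ T, ∑ j, ((V - X) i j) ^ 2 := by
          refine Finset.sum_congr rfl fun i hi => Finset.sum_congr rfl fun j _ => ?_
          have hX : X i j = 0 := by rw [hXzero i hi]; rfl
          simp [Matrix.sub_apply, hX]
      _ ≤ ∑ i ∈ Γ, ∑ j, ((V - X) i j) ^ 2 :=
          Finset.sum_le_sum_of_subset_of_nonneg Finset.sdiff_subset
            (fun _ _ _ => Finset.sum_nonneg fun _ _ => sq_nonneg _)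
end

section
/- Let A ∈ ℝ^{M×N} satisfy the restricted isometry property of order R+K with constant δ = δ_{R+K} < 1, let X be a K-row-sparse matrix with support T, T̂ a set of K row indices, and B = AX + W. Then the residual R = B − A_{T̂} A_{T̂}† B satisfies ‖R‖_F ≤ √(1+δ)·‖X_{T̂ᶜ,:}‖_F + ‖W‖_F. -/
open scoped BigOperators
open Matrix

lemma frob_nonneg' {m n : Type*} [Fintype m] [Fintype n] (X : Matrix m n ℝ) : 0 ≤ frob X :=
  Real.sqrt_nonneg _

lemma frob_eq_norm {m n : Type*} [Fintype m] [Fintype n] (X : Matrix m n ℝ) :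
    frob X = ‖(WithLp.equiv 2 ((m × n) → ℝ)).symm (fun p => X p.1 p.2)‖ := by
  rw [EuclideanSpace.norm_eq, frob]
  congr 1
  rw [Fintype.sum_prod_type]
  simp [sq_abs]

lemma frob_add_le {m n : Type*} [Fintype m] [Fintype n] (X Y : Matrix m n ℝ) :
    frob (X + Y) ≤ frob X + frob Y := by
  have h : (WithLp.equiv 2 ((m × n) → ℝ)).symm (fun p => (X + Y) p.1 p.2)
      = (WithLp.equiv 2 ((m × n) → ℝ)).symm (fun p => X p.1 p.2)
        + (WithLp.equiv 2 ((m × n) → ℝ)).symm (fun p => Y p.1 p.2) := by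
    ext p; simp [Matrix.add_apply]
  rw [frob_eq_norm, frob_eq_norm, frob_eq_norm, h]
  exact norm_add_le _ _

lemma frob_le_of_sq {m n : Type*} [Fintype m] [Fintype n] (X Y : Matrix m n ℝ)
    (h : ∑ i, ∑ j, (X i j)^2 ≤ ∑ i, ∑ j, (Y i j)^2) : frob X ≤ frob Y :=
  Real.sqrt_le_sqrt h

lemma proj_vec_contract {m : Type*} [Fintype m] [DecidableEq m]
    (P : Matrix m m ℝ) (hsym : Pᵀ = P) (hidem : P * P = P) (y : m → ℝ) :
    ∑ i, ((1 - P).mulVec y i)^2 ≤ ∑ i, (y i)^2 := by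
  set q := (1 - P).mulVec y with hq
  set p := P.mulVec y with hp
  have hsum : ∀ i, y i = q i + p i := by
    intro i
    have : (1 - P).mulVec y + P.mulVec y = (1 : Matrix m m ℝ).mulVec y := by
      rw [← Matrix.add_mulVec, sub_add_cancel]
    have := congrFun this i
    simpa [Matrix.one_mulVec] using this.symm
  have horth : ∑ i, q i * p i = 0 := by
    have h0 : (1 - P)ᵀ * P = 0 := by
      rw [Matrix.transpose_sub, Matrix.transpose_one, hsym, Matrix.sub_mul, Matrix.one_mul,
        hidem, sub_self]
    have : ∑ i, q i * p i = y ⬝ᵥ ((1 - P)ᵀ * P).mulVec y := by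
      rw [← Matrix.mulVec_mulVec, Matrix.dotProduct_mulVec, Matrix.vecMul_transpose]
      rfl
    rw [this, h0]
    simp
  have hps : 0 ≤ ∑ i, (p i)^2 := Finset.sum_nonneg fun i _ => sq_nonneg _
  have : ∑ i, (y i)^2 = ∑ i, (q i)^2 + 2 * (∑ i, q i * p i) + ∑ i, (p i)^2 := by
    rw [Finset.mul_sum, ← Finset.sum_add_distrib, ← Finset.sum_add_distrib]
    apply Finset.sum_congr rfl
    intro i _
    rw [hsum i]; ring
  rw [this, horth]
  linarith

lemma proj_contract {m l : Type*} [Fintype m] [Fintype l] [DecidableEq m]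
    (P : Matrix m m ℝ) (hsym : Pᵀ = P) (hidem : P * P = P) (Y : Matrix m l ℝ) :
    frob ((1 - P) * Y) ≤ frob Y := by
  apply frob_le_of_sq
  rw [Finset.sum_comm, Finset.sum_comm (s := Finset.univ) (t := Finset.univ) (f := fun i j => (Y i j)^2)]
  apply Finset.sum_le_sum
  intro j _
  have := proj_vec_contract P hsym hidem (fun k => Y k j)
  calc ∑ i, (((1 - P) * Y : Matrix m l ℝ) i j)^2
      = ∑ i, ((1 - P).mulVec (fun k => Y k j) i)^2 := by
        apply Finset.sum_congr rfl; intro i _; rfl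
    _ ≤ ∑ i, (Y i j)^2 := this

lemma frob_mul_le {M N L s : ℕ} {A : Matrix (Fin M) (Fin N) ℝ} {δ : ℝ}
    (hRIP : RIP A s δ) (hδ0 : 0 ≤ δ) (Y : Matrix (Fin N) (Fin L) ℝ)
    (hY : {i | Y i ≠ 0}.ncard ≤ s) :
    frob (A * Y) ≤ Real.sqrt (1 + δ) * frob Y := by
  rw [frob, frob, ← Real.sqrt_mul (by linarith)]
  apply Real.sqrt_le_sqrt
  rw [Finset.sum_comm,
    Finset.sum_comm (s := Finset.univ) (t := Finset.univ) (f := fun i j => (Y i j)^2),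
    Finset.mul_sum]
  apply Finset.sum_le_sum
  intro j _
  have hcol : {i | (fun k => Y k j) i ≠ 0}.ncard ≤ s := by
    refine le_trans (Set.ncard_le_ncard ?_ (Set.toFinite _)) hY
    intro i hi
    simp only [Set.mem_setOf_eq] at hi ⊢
    intro h; exact hi (by rw [h]; rfl)
  have := (hRIP (fun k => Y k j) hcol).2
  calc ∑ i, ((A * Y : Matrix (Fin M) (Fin L) ℝ) i j)^2
      = ∑ i, (A.mulVec (fun k => Y k j) i)^2 := by
        apply Finset.sum_congr rfl; intro i _; rfl
    _ ≤ (1 + δ) * ∑ i, (Y i j)^2 := this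

theorem stmt8 {M N L R K : ℕ} (A : Matrix (Fin M) (Fin N) ℝ) (δ : ℝ)
    (hδ0 : 0 ≤ δ) (hδ : δ < 1) (hRIP : RIP A (R + K) δ)
    (X : Matrix (Fin N) (Fin L) ℝ) (T : Finset (Fin N))
    (hsupp : ∀ i, X i ≠ 0 → i ∈ T) (hTK : T.card ≤ K)
    (That : Finset (Fin N)) (hThatK : That.card = K)
    (D : Matrix {j // j ∈ That} (Fin M) ℝ)
    (hD : IsPinv (colSub A That) D) (hDI : D * colSub A That = 1)
    (W B : Matrix (Fin M) (Fin L) ℝ) (hB : B = A * X + W) :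
    frob (B - colSub A That * (D * B)) ≤
      Real.sqrt (1 + δ) * frob (restrictRows X {i | i ∉ That}) + frob W := by
  classical
  set A' := colSub A That with hA'
  set P := A' * D with hP
  have hPsym : Pᵀ = P := hD.2.2.1
  have hPidem : P * P = P := by
    have h1 : P * P = ((A' * D) * A') * D := (Matrix.mul_assoc _ _ _).symm
    rw [h1, hD.1]
  set Xh := restrictRows X {i | i ∈ That} with hXh
  set Xc := restrictRows X {i | i ∉ That} with hXc
  have hX : X = Xh + Xc := by
    ext i j
    by_cases h : i ∈ That <;>
      simp [hXh, hXc, restrictRows, Set.indicator, h]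
  set Y : Matrix {j // j ∈ That} (Fin L) ℝ := fun k j => X k.1 j with hY
  have hAXh : A * Xh = A' * Y := by
    ext i j
    rw [Matrix.mul_apply, Matrix.mul_apply]
    have hrhs : ∑ k : {j0 // j0 ∈ That}, A' i k * Y k j = ∑ k ∈ That, A i k * X k j := by
      rw [← Finset.sum_coe_sort That (fun k => A i k * X k j)]
      rfl
    rw [hrhs]
    have : ∀ k : Fin N, A i k * Xh k j = if k ∈ That then A i k * X k j else 0 := by
      intro k
      by_cases h : k ∈ That <;> simp [hXh, restrictRows, Set.indicator, h]
    rw [Finset.sum_congr rfl (fun k _ => this k), Finset.sum_ite_mem, Finset.univ_inter]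
  have h0 : (1 - P) * (A * Xh) = 0 := by
    rw [hAXh, ← Matrix.mul_assoc]
    have : (1 - P) * A' = 0 := by
      rw [Matrix.sub_mul, Matrix.one_mul, hP, hD.1, sub_self]
    rw [this, Matrix.zero_mul]
  have hR : B - A' * (D * B) = (1 - P) * (A * Xc) + (1 - P) * W := by
    have h1 : A' * (D * B) = P * B := by rw [hP, Matrix.mul_assoc]
    rw [h1]
    have h2 : B - P * B = (1 - P) * B := by
      rw [Matrix.sub_mul, Matrix.one_mul]
    rw [h2, hB, Matrix.mul_add]
    have h3 : A * X = A * Xh + A * Xc := by rw [hX, Matrix.mul_add]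
    rw [h3, Matrix.mul_add, h0, zero_add]
  have hsparse : {i | Xc i ≠ 0}.ncard ≤ R + K := by
    have hsub : {i | Xc i ≠ 0} ⊆ (T : Set (Fin N)) := by
      intro i hi
      simp only [Set.mem_setOf_eq] at hi
      apply hsupp
      intro hXi
      apply hi
      funext j
      by_cases h : i ∈ That <;>
        simp [hXc, restrictRows, Set.indicator, h, congrFun hXi j]
    calc {i | Xc i ≠ 0}.ncard ≤ (T : Set (Fin N)).ncard :=
          Set.ncard_le_ncard hsub (Set.toFinite _)
      _ = T.card := Set.ncard_coe_finset T
      _ ≤ R + K := le_trans hTK (Nat.le_add_left K R)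
  calc frob (B - A' * (D * B))
      = frob ((1 - P) * (A * Xc) + (1 - P) * W) := by rw [hR]
    _ ≤ frob ((1 - P) * (A * Xc)) + frob ((1 - P) * W) := frob_add_le _ _
    _ ≤ frob (A * Xc) + frob W :=
        add_le_add (proj_contract P hPsym hPidem _) (proj_contract P hPsym hPidem _)
    _ ≤ Real.sqrt (1 + δ) * frob Xc + frob W :=
        add_le_add_left (frob_mul_le hRIP hδ0 Xc hsparse) _
end
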